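/- Define I(x, y, u) = −(1/9)·(u·x − 10·x·ln(x+4) − 5·u − 40·ln(x+4) − 9·y − 36)/(x+4) on the open set {(x,y,u) ∈ ℝ³ : x > −4}. Then on this set (x+4)·(x−5)·∂I/∂x + (−x+y+u)·(x−5)·∂I/∂y + (x+4)·∂I/∂u = 0; that is, I is a first integral of the 3D system dx/dt = (x+4)(x−5), dy/dt = (−x+y+u)(x−5), du/dt = x+4. -/

import Mathlib

/-- Partial derivative in the `x` direction of a function on `ℝ³`. -/
noncomputable def pdX (F : ℝ × ℝ × ℝ → ℝ) (p : ℝ × ℝ × ℝ) : ℝ :=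
  fderiv ℝ F p (1, 0, 0)

/-- Partial derivative in the `y` direction. -/
noncomputable def pdY (F : ℝ × ℝ × ℝ → ℝ) (p : ℝ × ℝ × ℝ) : ℝ :=
  fderiv ℝ F p (0, 1, 0)

/-- Partial derivative in the `u` (third) direction. -/
noncomputable def pdU (F : ℝ × ℝ × ℝ → ℝ) (p : ℝ × ℝ × ℝ) : ℝ :=
  fderiv ℝ F p (0, 0, 1)

/-- The first integral `I(x,y,u) = −(1/9)·(u·x − 10·x·ln(x+4) − 5·u − 40·ln(x+4) − 9·y − 36)/(x+4)`,
with the point `p = (x, y, u)`. -/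
noncomputable def Ifirst : ℝ × ℝ × ℝ → ℝ := fun p =>
  -(1 / 9) * (p.2.2 * p.1 - 10 * p.1 * Real.log (p.1 + 4) - 5 * p.2.2
      - 40 * Real.log (p.1 + 4) - 9 * p.2.1 - 36) / (p.1 + 4)

/-! Where `x + 4 ≠ 0`, the first integral simplifies to
`I = (10/9)·log(x+4) + (y+u+4)/(x+4) − u/9`. The combination of partial derivatives in the
statement is the derivative of `I` in the direction of the vector field
`V = ((x+4)(x−5), (−x+y+u)(x−5), x+4)`, and along `V` the three terms change at the rates
`(10/9)(x−5)`, `6 − x` and `−(x+4)/9`, which add up to zero. -/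

open Real Topology

theorem fderiv_apply_eq_pd (F : ℝ × ℝ × ℝ → ℝ) (p : ℝ × ℝ × ℝ) (a b c : ℝ) :
    fderiv ℝ F p (a, b, c) = a * pdX F p + b * pdY F p + c * pdU F p := by
  have hv : ((a, b, c) : ℝ × ℝ × ℝ) = a • (1, 0, 0) + b • (0, 1, 0) + c • (0, 0, 1) := by
    simp
  rw [hv, map_add, map_add, map_smul, map_smul, map_smul]
  rfl

noncomputable def Ireduced (p : ℝ × ℝ × ℝ) : ℝ :=
  10 / 9 * log (p.1 + 4) + (p.2.1 + p.2.2 + 4) / (p.1 + 4) - p.2.2 / 9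

theorem Ifirst_eq_Ireduced {p : ℝ × ℝ × ℝ} (hp : p.1 + 4 ≠ 0) : Ifirst p = Ireduced p := by
  unfold Ifirst Ireduced
  field_simp
  ring

theorem Ifirst_eventuallyEq_Ireduced {p : ℝ × ℝ × ℝ} (hp : p.1 + 4 ≠ 0) :
    Ifirst =ᶠ[𝓝 p] Ireduced := by
  have hopen : IsOpen {q : ℝ × ℝ × ℝ | q.1 + 4 ≠ 0} :=
    isOpen_ne_fun (by fun_prop) continuous_const
  filter_upwards [hopen.mem_nhds hp] with q hq using Ifirst_eq_Ireduced hq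

theorem differentiableAt_Ireduced {p : ℝ × ℝ × ℝ} (hp : p.1 + 4 ≠ 0) :
    DifferentiableAt ℝ Ireduced p := by
  unfold Ireduced
  fun_prop (disch := exact hp)

theorem hasLineDerivAt_Ireduced {p : ℝ × ℝ × ℝ} (v : ℝ × ℝ × ℝ) (hp : p.1 + 4 ≠ 0) :
    HasLineDerivAt ℝ Ireduced
      (10 / 9 * v.1 / (p.1 + 4)
        + ((v.2.1 + v.2.2) * (p.1 + 4) - (p.2.1 + p.2.2 + 4) * v.1) / (p.1 + 4) ^ 2
        - v.2.2 / 9) p v := by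
  have affine (a b : ℝ) : HasDerivAt (fun t : ℝ => a + t * b) b 0 := by
    simpa using ((hasDerivAt_id (0 : ℝ)).mul_const b).const_add a
  have hx := affine (p.1 + 4) v.1
  have hx0 : p.1 + 4 + 0 * v.1 ≠ 0 := by simpa using hp
  have h := (((hx.log hx0).const_mul (10 / 9)).add
    ((affine (p.2.1 + p.2.2 + 4) (v.2.1 + v.2.2)).div hx hx0)).sub
    ((affine p.2.2 v.2.2).div_const 9)
  unfold HasLineDerivAt Ireduced
  convert h using 1
  · funext t
    simp only [Prod.fst_add, Prod.snd_add, Prod.smul_fst, Prod.smul_snd, smul_eq_mul,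
      Pi.add_apply, Pi.sub_apply, Pi.div_apply]
    ring_nf
  · ring

theorem Ifirst_is_first_integral :
    ∀ p : ℝ × ℝ × ℝ, p.1 > -4 →
      (p.1 + 4) * (p.1 - 5) * pdX Ifirst p
        + (-p.1 + p.2.1 + p.2.2) * (p.1 - 5) * pdY Ifirst p
        + (p.1 + 4) * pdU Ifirst p = 0 := by
  intro p hp
  have hp' : p.1 + 4 ≠ 0 := by linarith
  rw [← fderiv_apply_eq_pd, (Ifirst_eventuallyEq_Ireduced hp').fderiv_eq,
    ← (differentiableAt_Ireduced hp').lineDeriv_eq_fderiv,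
    (hasLineDerivAt_Ireduced _ hp').lineDeriv]
  field_simp
  ring
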